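/- arXiv:math/0702268 — 5 statements merged into one kernel-verified Lean document; each statement's English description precedes it below -/
import Mathlib

section
/- Contraction is transitive: if a Lie algebra structure d is a contraction of d' and d' is a contraction of d'', all on the same finite-dimensional vector space V, then d is a contraction of d''. -/
/- STATEMENT 7: Contraction is transitive: if a Lie algebra structure `d` is a
contraction of `d'` and `d'` is a contraction of `d''`, all on the same
finite-dimensional vector space `V = ℂⁿ`, then `d` is a contraction of `d''`.
`d` is a contraction of `d'` if there is a family `g_t` of invertible linear maps
(used for `t ≠ 0` near `0`) such that `lim_{t→0} g_t*(d')` exists and is equivalent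
to `d`, with `d` not equivalent to `d'`. -/

open Filter Topology

/-- A Lie algebra structure on `ℂⁿ`: an antisymmetric bilinear bracket satisfying
the Jacobi identity. -/
def IsLieStr {n : ℕ} (B : (Fin n → ℂ) →ₗ[ℂ] (Fin n → ℂ) →ₗ[ℂ] (Fin n → ℂ)) : Prop :=
  (∀ x, B x x = 0) ∧ ∀ x y z, B (B x y) z + B (B y z) x + B (B z x) y = 0

/-- Equivalence (isomorphism) of two bracket structures on `ℂⁿ`. -/
def EquivStr {n : ℕ} (B B' : (Fin n → ℂ) →ₗ[ℂ] (Fin n → ℂ) →ₗ[ℂ] (Fin n → ℂ)) : Prop :=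
  ∃ g : (Fin n → ℂ) ≃ₗ[ℂ] (Fin n → ℂ), ∀ x y, g (B x y) = B' (g x) (g y)

/-- `B` is a contraction of `B'`: for some family `g_t` of automorphisms,
`lim_{t→0} g_t⁻¹ B'(g_t x, g_t y)` exists, the limit is equivalent to `B`, and
`B` is not equivalent to `B'`. -/
def IsContractionOf {n : ℕ}
    (B' B : (Fin n → ℂ) →ₗ[ℂ] (Fin n → ℂ) →ₗ[ℂ] (Fin n → ℂ)) : Prop :=
  ∃ g : ℂ → ((Fin n → ℂ) ≃ₗ[ℂ] (Fin n → ℂ)),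
    ∃ L : (Fin n → ℂ) →ₗ[ℂ] (Fin n → ℂ) →ₗ[ℂ] (Fin n → ℂ),
      (∀ x y, Tendsto (fun t : ℂ => (g t).symm (B' (g t x) (g t y)))
          (𝓝[≠] (0 : ℂ)) (𝓝 (L x y)))
        ∧ EquivStr L B ∧ ¬ EquivStr B B'

namespace CtrAux

variable {n : ℕ}

abbrev Bil (n : ℕ) := (Fin n → ℂ) →ₗ[ℂ] (Fin n → ℂ) →ₗ[ℂ] (Fin n → ℂ)

noncomputable abbrev ee (i : Fin n) : Fin n → ℂ := Pi.single i 1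

/-- coordinates of a bilinear map -/
noncomputable def toPt (C : Bil n) : Fin n × Fin n × Fin n → ℂ :=
  fun p => C (ee p.1) (ee p.2.1) p.2.2

/-- action of a pair of matrices: `act g h C x y = h ⬝ (C (g x) (g y))` -/
noncomputable def act (g h : Matrix (Fin n) (Fin n) ℂ) (C : Bil n) : Bil n :=
  (C.compl₁₂ g.mulVecLin g.mulVecLin).compr₂ h.mulVecLin

lemma act_apply (g h : Matrix (Fin n) (Fin n) ℂ) (C : Bil n) (x y : Fin n → ℂ) :
    act g h C x y = h.mulVec (C (g.mulVec x) (g.mulVec y)) := rfl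

def orbit (B : Bil n) : Set (Bil n) := {C | EquivStr C B}

noncomputable def pts (B : Bil n) : Set ((Fin n × Fin n × Fin n) → ℂ) := toPt '' orbit B

noncomputable def VI (B : Bil n) : Ideal (MvPolynomial (Fin n × Fin n × Fin n) ℂ) :=
  MvPolynomial.vanishingIdeal ℂ (pts B)

/- ------------ group 1 : equivalence basics ------------- -/

lemma equiv_refl (B : Bil n) : EquivStr B B :=
  ⟨LinearEquiv.refl ℂ _, fun x y => rfl⟩
lemma equiv_symm {B C : Bil n} (h : EquivStr B C) : EquivStr C B := by
  obtain ⟨g, hg⟩ := h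
  refine ⟨g.symm, fun x y => ?_⟩
  have := hg (g.symm x) (g.symm y)
  simp only [g.apply_symm_apply] at this
  rw [← this, g.symm_apply_apply]
lemma equiv_trans {B C D : Bil n} (h : EquivStr B C) (h' : EquivStr C D) : EquivStr B D := by
  obtain ⟨g, hg⟩ := h
  obtain ⟨g', hg'⟩ := h'
  exact ⟨g.trans g', fun x y => by
    simp only [LinearEquiv.trans_apply, hg, hg']⟩

lemma bil_ext {C C' : Bil n} (h : ∀ i j, C (ee i) (ee j) = C' (ee i) (ee j)) : C = C' := by
  apply (Pi.basisFun ℂ (Fin n)).ext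
  intro i
  apply (Pi.basisFun ℂ (Fin n)).ext
  intro j
  simpa [Pi.basisFun_apply] using h i j

lemma pi_expand (x : Fin n → ℂ) : x = ∑ i, x i • (ee i : Fin n → ℂ) := by
  ext l
  simp [ee, Finset.sum_apply, Pi.single_apply]

lemma bil_expand (C : Bil n) (x y : Fin n → ℂ) :
    C x y = ∑ i, ∑ j, (x i * y j) • C (ee i) (ee j) := by
  conv_lhs => rw [pi_expand x, pi_expand y]
  simp only [map_sum, LinearMap.sum_apply, map_smul, LinearMap.smul_apply,
    Finset.smul_sum, smul_smul]
  rw [Finset.sum_comm]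
  exact Finset.sum_congr rfl fun i _ => Finset.sum_congr rfl fun j _ => by rw [mul_comm]

lemma equivStr_iff_act {C B : Bil n} :
    EquivStr C B ↔ ∃ g h : Matrix (Fin n) (Fin n) ℂ,
      g * h = 1 ∧ h * g = 1 ∧ C = act g h B := by
  constructor
  · rintro ⟨γ, hγ⟩
    refine ⟨LinearMap.toMatrix' (γ : (Fin n → ℂ) →ₗ[ℂ] (Fin n → ℂ)),
      LinearMap.toMatrix' (γ.symm : (Fin n → ℂ) →ₗ[ℂ] (Fin n → ℂ)), ?_, ?_, ?_⟩
    · rw [← LinearMap.toMatrix'_comp]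
      convert LinearMap.toMatrix'_id (R := ℂ) (n := Fin n)
      ext v : 1
      simp
    · rw [← LinearMap.toMatrix'_comp]
      convert LinearMap.toMatrix'_id (R := ℂ) (n := Fin n)
      ext v : 1
      simp
    · refine LinearMap.ext fun x => LinearMap.ext fun y => ?_
      rw [act_apply]
      have h1 : ∀ z, (LinearMap.toMatrix' (γ : (Fin n → ℂ) →ₗ[ℂ] (Fin n → ℂ))).mulVec z = γ z := by
        intro z
        rw [← Matrix.toLin'_apply, Matrix.toLin'_toMatrix']
        rfl
      have h2 : ∀ z, (LinearMap.toMatrix' (γ.symm : (Fin n → ℂ) →ₗ[ℂ] (Fin n → ℂ))).mulVec z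
          = γ.symm z := by
        intro z
        rw [← Matrix.toLin'_apply, Matrix.toLin'_toMatrix']
        rfl
      rw [h1, h1, h2, ← hγ, γ.symm_apply_apply]
  · rintro ⟨g, h, hgh, hhg, rfl⟩
    refine ⟨LinearEquiv.ofLinear (Matrix.toLin' g) (Matrix.toLin' h) ?_ ?_, fun x y => ?_⟩
    · rw [← Matrix.toLin'_mul, hgh, Matrix.toLin'_one]
    · rw [← Matrix.toLin'_mul, hhg, Matrix.toLin'_one]
    · simp only [LinearEquiv.ofLinear_apply, Matrix.toLin'_apply, act_apply,
        Matrix.mulVec_mulVec, hgh, Matrix.one_mulVec]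

lemma act_mem_orbit {B C : Bil n} {g h : Matrix (Fin n) (Fin n) ℂ}
    (hgh : g * h = 1) (hhg : h * g = 1) (hC : C ∈ orbit B) : act g h C ∈ orbit B := by
  have h1 : EquivStr (act g h C) C := equivStr_iff_act.2 ⟨g, h, hgh, hhg, rfl⟩
  exact equiv_trans h1 hC

lemma orbit_eq_of_equiv {B C : Bil n} (h : EquivStr B C) : orbit B = orbit C := by
  ext D
  exact ⟨fun hD => equiv_trans hD h, fun hD => equiv_trans hD (equiv_symm h)⟩

/- ------------ group 2 : polynomial encodings ------------- -/

abbrev GVar (n : ℕ) := (Fin n × Fin n) ⊕ (Fin n × Fin n)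

/-- the set of (g, h) with g*h = h*g = 1 -/
def Xgl (n : ℕ) : Set (GVar n → ℂ) :=
  {v | (Matrix.of fun i j => v (.inl (i,j))) * (Matrix.of fun i j => v (.inr (i,j))) = 1 ∧
       (Matrix.of fun i j => v (.inr (i,j))) * (Matrix.of fun i j => v (.inl (i,j))) = 1}

noncomputable def gmat (v : GVar n → ℂ) : Matrix (Fin n) (Fin n) ℂ :=
  Matrix.of fun i j => v (.inl (i,j))
noncomputable def hmat (v : GVar n → ℂ) : Matrix (Fin n) (Fin n) ℂ :=
  Matrix.of fun i j => v (.inr (i,j))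

open MvPolynomial in
/-- polynomial family expressing the coordinates of `act g h B` -/
noncomputable def fpoly (B : Bil n) (k : Fin n × Fin n × Fin n) : MvPolynomial (GVar n) ℂ :=
  ∑ m, X (.inr (k.2.2, m)) *
    ∑ r, ∑ s, MvPolynomial.C ((B (ee r) (ee s)) m) * X (.inl (r, k.1)) * X (.inl (s, k.2.1))

open MvPolynomial in
lemma eval_fpoly (B : Bil n) (v : GVar n → ℂ) (k : Fin n × Fin n × Fin n) :
    eval v (fpoly B k) = toPt (act (gmat v) (hmat v) B) k := by
  have hg : ∀ i : Fin n, (gmat v).mulVec (ee i) = fun r => v (.inl (r, i)) := by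
    intro i
    funext r
    simp [ee, Matrix.mulVec_single, gmat]
  rw [toPt, act_apply, hg, hg]
  have hB := bil_expand B (fun r => v (.inl (r, k.1))) (fun s => v (.inl (s, k.2.1)))
  rw [hB]
  simp only [fpoly, map_sum, eval_mul, eval_X, eval_C, Matrix.mulVec, dotProduct,
    Finset.sum_apply, Pi.smul_apply, smul_eq_mul, hmat, Matrix.of_apply]
  refine Finset.sum_congr rfl fun m _ => ?_
  congr 1
  exact Finset.sum_congr rfl fun r _ => Finset.sum_congr rfl fun s' _ => by ring

noncomputable def qIdeal (n : ℕ) : Ideal (MvPolynomial (GVar n) ℂ) :=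
  MvPolynomial.vanishingIdeal ℂ (Xgl n)

open MvPolynomial in
lemma pts_eq_image (B : Bil n) :
    pts B = (fun v k => eval v (fpoly B k)) '' (Xgl n) := by
  ext w
  constructor
  · rintro ⟨C, hC, rfl⟩
    obtain ⟨g, h, hgh, hhg, rfl⟩ := equivStr_iff_act.1 hC
    refine ⟨Sum.elim (fun p => g p.1 p.2) (fun p => h p.1 p.2), ?_, ?_⟩
    · constructor
      · convert hgh using 2 <;> ext i j <;> rfl
      · convert hhg using 2 <;> ext i j <;> rfl
    · funext k
      show eval _ (fpoly B k) = toPt (act g h B) k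
      rw [eval_fpoly]
      congr 2 <;> ext i j <;> rfl
  · rintro ⟨v, hv, rfl⟩
    refine ⟨act (gmat v) (hmat v) B, ?_, ?_⟩
    · exact equivStr_iff_act.2 ⟨gmat v, hmat v, hv.1, hv.2, rfl⟩
    · funext k
      show toPt (act (gmat v) (hmat v) B) k = eval v (fpoly B k)
      rw [eval_fpoly]

open MvPolynomial in
noncomputable def Mgen (n : ℕ) : Matrix (Fin n) (Fin n) (MvPolynomial (Fin n × Fin n) ℂ) :=
  Matrix.of fun i j => X (i, j)

noncomputable def dgen (n : ℕ) : MvPolynomial (Fin n × Fin n) ℂ := (Mgen n).det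

open MvPolynomial in
lemma eval_Mgen (w : (Fin n × Fin n) → ℂ) :
    (Mgen n).map (eval w) = Matrix.of fun i j => w (i, j) := by
  ext i j
  simp [Mgen]

open MvPolynomial in
lemma eval_dgen (w : (Fin n × Fin n) → ℂ) :
    eval w (dgen n) = (Matrix.of fun i j => w (i, j)).det := by
  rw [dgen, RingHom.map_det, RingHom.mapMatrix_apply, eval_Mgen]

open MvPolynomial in
lemma dgen_ne_zero (n : ℕ) : dgen n ≠ 0 := by
  intro h
  have := eval_dgen (n := n) (fun p => if p.1 = p.2 then 1 else 0)
  rw [h] at this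
  have h1 : (Matrix.of fun i j : Fin n => if i = j then (1:ℂ) else 0) = 1 := by
    ext i j
    simp [Matrix.one_apply]
  rw [h1, Matrix.det_one, map_zero] at this
  exact one_ne_zero this.symm

open MvPolynomial in
noncomputable def psiHom (n : ℕ) :
    MvPolynomial (GVar n) ℂ →+* Localization.Away (dgen n) :=
  eval₂Hom ((algebraMap (MvPolynomial (Fin n × Fin n) ℂ) (Localization.Away (dgen n))).comp
      (MvPolynomial.C : ℂ →+* MvPolynomial (Fin n × Fin n) ℂ))
    (Sum.elim (fun p => algebraMap (MvPolynomial (Fin n × Fin n) ℂ)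
        (Localization.Away (dgen n)) (X p))
      (fun p => IsLocalization.Away.invSelf (dgen n) *
        algebraMap (MvPolynomial (Fin n × Fin n) ℂ) (Localization.Away (dgen n))
          ((Mgen n).adjugate p.1 p.2)))

open MvPolynomial in
lemma exists_eps {v : GVar n → ℂ} (hv : v ∈ Xgl n) :
    ∃ ε : Localization.Away (dgen n) →+* ℂ, ε.comp (psiHom n) = eval v ∧
      ∀ a, ε (algebraMap _ _ a) = eval (fun p : Fin n × Fin n => v (.inl p)) a := by
  set w : (Fin n × Fin n) → ℂ := fun p => v (.inl p) with hw
  have hgw : (Matrix.of fun i j : Fin n => w (i, j)) = gmat v := rfl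
  have hdet : eval w (dgen n) = (gmat v).det := by rw [eval_dgen, hgw]
  have hdetu : IsUnit (eval w (dgen n)) := by
    rw [hdet]
    refine IsUnit.of_mul_eq_one (hmat v).det ?_
    have h1 : gmat v * hmat v = 1 := hv.1
    rw [← Matrix.det_mul, h1, Matrix.det_one]
  have hdetne : (gmat v).det ≠ 0 := by
    rw [← hdet]; exact hdetu.ne_zero
  refine ⟨IsLocalization.Away.lift (S := Localization.Away (dgen n)) (dgen n) hdetu, ?_,
    fun a => IsLocalization.Away.lift_eq _ _ _⟩
  have hεinv : IsLocalization.Away.lift (S := Localization.Away (dgen n)) (dgen n) hdetu (IsLocalization.Away.invSelf (dgen n))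
      = ((gmat v).det)⁻¹ := by
    have h0 := congrArg (IsLocalization.Away.lift (S := Localization.Away (dgen n)) (dgen n) hdetu)
      (IsLocalization.Away.mul_invSelf (S := Localization.Away (dgen n)) (dgen n))
    rw [map_mul, map_one, IsLocalization.Away.lift_eq, hdet] at h0
    exact (inv_eq_of_mul_eq_one_right h0).symm
  have hinv : (gmat v)⁻¹ = hmat v := Matrix.inv_eq_right_inv hv.1
  apply MvPolynomial.ringHom_ext
  · intro r
    simp [psiHom, IsLocalization.Away.lift_eq]
  · rintro (p | p)
    · simp only [RingHom.comp_apply, psiHom, eval₂Hom_X', Sum.elim_inl,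
        IsLocalization.Away.lift_eq, eval_X]
      rfl
    · simp only [RingHom.comp_apply, psiHom, eval₂Hom_X', Sum.elim_inr, map_mul,
        IsLocalization.Away.lift_eq, eval_X, hεinv]
    
      have hadj : eval w ((Mgen n).adjugate p.1 p.2) = (gmat v).adjugate p.1 p.2 := by
        have hma := (eval w : MvPolynomial (Fin n × Fin n) ℂ →+* ℂ).map_adjugate (Mgen n)
        calc eval w ((Mgen n).adjugate p.1 p.2)
            = ((eval w : MvPolynomial (Fin n × Fin n) ℂ →+* ℂ).mapMatrix
                (Mgen n).adjugate) p.1 p.2 := rfl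
          _ = (((eval w : MvPolynomial (Fin n × Fin n) ℂ →+* ℂ).mapMatrix
                (Mgen n)).adjugate) p.1 p.2 := by rw [hma]
          _ = (gmat v).adjugate p.1 p.2 := by
                rw [RingHom.mapMatrix_apply, eval_Mgen, hgw]
      rw [hadj]
      have : v (Sum.inr p) = hmat v p.1 p.2 := rfl
      rw [this, ← hinv, Matrix.inv_def, Matrix.smul_apply, Ring.inverse_eq_inv', smul_eq_mul]

open MvPolynomial in
lemma qIdeal_eq_ker (n : ℕ) : qIdeal n = RingHom.ker (psiHom n) := by
  ext p
  rw [qIdeal, mem_vanishingIdeal_iff, RingHom.mem_ker]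
  simp only [MvPolynomial.aeval_eq_eval]
  constructor
  · intro h
    obtain ⟨⟨q₀, s⟩, hs⟩ := IsLocalization.surj (Submonoid.powers (dgen n)) (psiHom n p)
    have hq0 : q₀ = 0 := by
      have hqd : q₀ * dgen n = 0 := by
        apply MvPolynomial.funext
        intro w
        rw [map_zero, map_mul]
        by_cases hdet : eval w (dgen n) = 0
        · rw [hdet, mul_zero]
        · have hdetu : IsUnit (Matrix.of fun i j : Fin n => w (i, j)).det := by
            rw [← eval_dgen]; exact isUnit_iff_ne_zero.2 hdet
          set gw : Matrix (Fin n) (Fin n) ℂ := Matrix.of fun i j => w (i, j) with hgwdef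
          set v : GVar n → ℂ := Sum.elim w (fun p => gw⁻¹ p.1 p.2) with hvdef
          have hv : v ∈ Xgl n := by
            constructor
            · have : (Matrix.of fun i j => v (.inr (i,j))) = gw⁻¹ := rfl
              rw [this]
              have : (Matrix.of fun i j => v (.inl (i,j))) = gw := rfl
              rw [this]
              exact Matrix.mul_nonsing_inv _ hdetu
            · have h1 : (Matrix.of fun i j => v (.inr (i,j))) = gw⁻¹ := rfl
              have h2 : (Matrix.of fun i j => v (.inl (i,j))) = gw := rfl
              rw [h1, h2]
              exact Matrix.nonsing_inv_mul _ hdetu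
          obtain ⟨ε, hε, hεa⟩ := exists_eps hv
          have h3 := congrArg ε hs
          rw [map_mul, hεa] at h3
          have h4 : ε (psiHom n p) = eval v p := by
            rw [← hε]; rfl
          rw [h4, h v hv, zero_mul, hεa] at h3
          have h5 : (fun p : Fin n × Fin n => v (.inl p)) = w := rfl
          rw [h5] at h3
          rw [← h3, zero_mul]
      rcases mul_eq_zero.1 hqd with h' | h'
      · exact h'
      · exact absurd h' (dgen_ne_zero n)
    rw [hq0, map_zero] at hs
    have hu := IsLocalization.map_units (Localization.Away (dgen n)) s
    exact (hu.mul_left_eq_zero).1 hs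
  · intro h v hv
    obtain ⟨ε, hε, hεa⟩ := exists_eps hv
    have h4 : ε (psiHom n p) = eval v p := by rw [← hε]; rfl
    rw [← h4, h, map_zero]

lemma qIdeal_prime (n : ℕ) : (qIdeal n).IsPrime := by
  haveI : IsDomain (Localization.Away (dgen n)) :=
    IsLocalization.isDomain_localization
      (powers_le_nonZeroDivisors_of_noZeroDivisors (dgen_ne_zero n))
  rw [qIdeal_eq_ker]
  exact RingHom.ker_isPrime (psiHom n)

/-- the coordinate-ring map of the orbit parametrization -/
noncomputable def toD (B : Bil n) :
    MvPolynomial (Fin n × Fin n × Fin n) ℂ →+* (MvPolynomial (GVar n) ℂ ⧸ qIdeal n) :=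
  (Ideal.Quotient.mk (qIdeal n)).comp (MvPolynomial.aeval (fpoly B)).toRingHom

open MvPolynomial in
lemma eval_aeval_comp (f : (Fin n × Fin n × Fin n) → MvPolynomial (GVar n) ℂ)
    (v : GVar n → ℂ) (p : MvPolynomial (Fin n × Fin n × Fin n) ℂ) :
    eval v (aeval f p) = eval (fun k => eval v (f k)) p := by
  have : (eval v).comp ((aeval f : MvPolynomial (Fin n × Fin n × Fin n) ℂ →ₐ[ℂ]
      MvPolynomial (GVar n) ℂ) : MvPolynomial (Fin n × Fin n × Fin n) ℂ →+* _)
      = eval (fun k => eval v (f k)) := by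
    apply MvPolynomial.ringHom_ext
    · intro r
      simp
    · intro s
      simp
  exact congrFun (congrArg (fun (F : _ →+* ℂ) => (F : _ → ℂ)) this) p

open MvPolynomial in
lemma ker_toD (B : Bil n) : RingHom.ker (toD B) = VI B := by
  ext p
  rw [RingHom.mem_ker, toD, RingHom.comp_apply, Ideal.Quotient.eq_zero_iff_mem, qIdeal,
    mem_vanishingIdeal_iff, VI, mem_vanishingIdeal_iff]
  simp only [MvPolynomial.aeval_eq_eval]
  constructor
  · rintro h w hw
    rw [pts_eq_image] at hw
    obtain ⟨v, hv, rfl⟩ := hw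
    have := h v hv
    rwa [AlgHom.toRingHom_eq_coe, RingHom.coe_coe, eval_aeval_comp] at this
  · intro h v hv
    rw [AlgHom.toRingHom_eq_coe, RingHom.coe_coe, eval_aeval_comp]
    refine h _ ?_
    rw [pts_eq_image]
    exact ⟨v, hv, rfl⟩

/- ------------ group 3 : analysis ------------- -/

/-- conjugate of a bilinear map by a linear equivalence -/
noncomputable def conjB (γ : (Fin n → ℂ) ≃ₗ[ℂ] (Fin n → ℂ)) (B : Bil n) : Bil n :=
  (B.compl₁₂ γ.toLinearMap γ.toLinearMap).compr₂ γ.symm.toLinearMap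

lemma conjB_apply (γ : (Fin n → ℂ) ≃ₗ[ℂ] (Fin n → ℂ)) (B : Bil n) (x y : Fin n → ℂ) :
    conjB γ B x y = γ.symm (B (γ x) (γ y)) := rfl

lemma conjB_mem_orbit (γ : (Fin n → ℂ) ≃ₗ[ℂ] (Fin n → ℂ)) (B : Bil n) :
    conjB γ B ∈ orbit B := by
  refine ⟨γ, fun x y => ?_⟩
  rw [conjB_apply, γ.apply_symm_apply]

lemma toPt_mem_closure {B' L : Bil n} (g : ℂ → ((Fin n → ℂ) ≃ₗ[ℂ] (Fin n → ℂ)))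
    (hg : ∀ x y, Tendsto (fun t : ℂ => (g t).symm (B' (g t x) (g t y)))
      (𝓝[≠] (0 : ℂ)) (𝓝 (L x y))) :
    toPt L ∈ closure (pts B') := by
  have hFt : Tendsto (fun t => toPt (conjB (g t) B')) (𝓝[≠] (0 : ℂ)) (𝓝 (toPt L)) := by
    rw [tendsto_pi_nhds]
    intro k
    have := (tendsto_pi_nhds.1 (hg (ee k.1) (ee k.2.1))) k.2.2
    exact this
  refine mem_closure_of_tendsto hFt (Eventually.of_forall fun t => ?_)
  exact ⟨conjB (g t) B', conjB_mem_orbit _ _, rfl⟩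

noncomputable def toPtL : Bil n →ₗ[ℂ] ((Fin n × Fin n × Fin n) → ℂ) where
  toFun := toPt
  map_add' C C' := by funext k; simp [toPt]
  map_smul' c C := by funext k; simp [toPt]

noncomputable def fromPt (v : (Fin n × Fin n × Fin n) → ℂ) : Bil n :=
  LinearMap.mk₂ ℂ (fun x y => fun l => ∑ i, ∑ j, x i * y j * v (i, j, l))
    (fun x x' y => by
      funext l
      simp only [Pi.add_apply, add_mul, Finset.sum_add_distrib])
    (fun c x y => by
      funext l
      simp only [Pi.smul_apply, smul_eq_mul, Finset.mul_sum]
      exact Finset.sum_congr rfl fun i _ => Finset.sum_congr rfl fun j _ => by ring)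
    (fun x y y' => by
      funext l
      simp only [Pi.add_apply, mul_add, add_mul, Finset.sum_add_distrib])
    (fun c x y => by
      funext l
      simp only [Pi.smul_apply, smul_eq_mul, Finset.mul_sum]
      exact Finset.sum_congr rfl fun i _ => Finset.sum_congr rfl fun j _ => by ring)

lemma fromPt_apply (v : (Fin n × Fin n × Fin n) → ℂ) (x y : Fin n → ℂ) (l : Fin n) :
    fromPt v x y l = ∑ i, ∑ j, x i * y j * v (i, j, l) := rfl

lemma fromPt_toPt (C : Bil n) : fromPt (toPt C) = C := by
  refine LinearMap.ext fun x => LinearMap.ext fun y => ?_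
  funext l
  rw [fromPt_apply, bil_expand C x y]
  simp only [Finset.sum_apply, Pi.smul_apply, smul_eq_mul, toPt]

lemma toPt_fromPt (v : (Fin n × Fin n × Fin n) → ℂ) : toPt (fromPt v) = v := by
  funext k
  obtain ⟨i, j, l⟩ := k
  show fromPt v (ee i) (ee j) l = v (i, j, l)
  rw [fromPt_apply]
  simp [ee, Pi.single_apply, Finset.sum_ite_eq', mul_ite, ite_mul]

lemma toPt_injective : Function.Injective (toPt (n := n)) := by
  intro C C' h
  rw [← fromPt_toPt C, ← fromPt_toPt C', h]

noncomputable def fromPtL : ((Fin n × Fin n × Fin n) → ℂ) →ₗ[ℂ] Bil n where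
  toFun := fromPt
  map_add' v w := by
    refine LinearMap.ext fun x => LinearMap.ext fun y => ?_
    funext l
    simp only [fromPt_apply, LinearMap.add_apply, Pi.add_apply, mul_add,
      Finset.sum_add_distrib]
  map_smul' c v := by
    refine LinearMap.ext fun x => LinearMap.ext fun y => ?_
    funext l
    simp only [fromPt_apply, RingHom.id_apply, LinearMap.smul_apply, Pi.smul_apply,
      smul_eq_mul, Finset.mul_sum]
    exact Finset.sum_congr rfl fun i _ => Finset.sum_congr rfl fun j _ => by ring

noncomputable def actL (g h : Matrix (Fin n) (Fin n) ℂ) : Bil n →ₗ[ℂ] Bil n where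
  toFun := act g h
  map_add' C C' := by
    refine LinearMap.ext fun x => LinearMap.ext fun y => ?_
    simp [act_apply, Matrix.mulVec_add]
  map_smul' c C := by
    refine LinearMap.ext fun x => LinearMap.ext fun y => ?_
    simp [act_apply, Matrix.mulVec_smul]

open MvPolynomial in
lemma VI_le_of_closure {B B' L : Bil n} (hL : toPt L ∈ closure (pts B'))
    (hLB : EquivStr L B) : VI B' ≤ VI B := by
  intro p hp
  rw [VI, mem_vanishingIdeal_iff] at hp ⊢
  simp only [MvPolynomial.aeval_eq_eval] at hp ⊢
  rintro w ⟨C, hC, rfl⟩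
  obtain ⟨gm, hm, hgh, hhg, hCact⟩ := equivStr_iff_act.1 (equiv_trans hC (equiv_symm hLB))
  set Θ : ((Fin n × Fin n × Fin n) → ℂ) →ₗ[ℂ] ((Fin n × Fin n × Fin n) → ℂ) :=
    toPtL ∘ₗ (actL gm hm) ∘ₗ fromPtL with hΘ
  have hcont : Continuous fun u => eval (Θ u) p :=
    (MvPolynomial.continuous_eval p).comp Θ.continuous_of_finiteDimensional
  have hzero : Set.EqOn (fun u => eval (Θ u) p) (fun _ => (0:ℂ)) (pts B') := by
    rintro u ⟨C', hC', rfl⟩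
    have : Θ (toPt C') = toPt (act gm hm C') := by
      show toPt (act gm hm (fromPt (toPt C'))) = toPt (act gm hm C')
      rw [fromPt_toPt]
    show eval (Θ (toPt C')) p = 0
    rw [this]
    exact hp _ ⟨act gm hm C', act_mem_orbit hgh hhg hC', rfl⟩
  have := (hzero.closure hcont continuous_const) hL
  have hΘL : Θ (toPt L) = toPt C := by
    show toPt (act gm hm (fromPt (toPt L))) = toPt C
    rw [fromPt_toPt, ← hCact]
  simpa [hΘL] using this

/- ------------ group 4 : algebra endgame ------------- -/

lemma tens_exists (A D₁ D₂ : Type) [CommRing A] [IsDomain A]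
    [CommRing D₁] [IsDomain D₁] [CommRing D₂] [IsDomain D₂]
    (β₁ : A →+* D₁) (β₂ : A →+* D₂)
    (h₁ : Function.Injective β₁) (h₂ : Function.Injective β₂) :
    ∃ (T : Type) (_ : CommRing T) (_ : Nontrivial T) (χ₁ : D₁ →+* T) (χ₂ : D₂ →+* T),
      χ₁.comp β₁ = χ₂.comp β₂ := by
  classical
  let K := FractionRing A
  let F₁ := FractionRing D₁
  let F₂ := FractionRing D₂
  -- the induced maps K → F₁, K → F₂
  have hu₁ : ∀ y : nonZeroDivisors A, IsUnit (((algebraMap D₁ F₁).comp β₁) y) := by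
    rintro ⟨y, hy⟩
    have hyne : y ≠ 0 := nonZeroDivisors.ne_zero hy
    have : β₁ y ≠ 0 := fun h => hyne (h₁ (by rwa [map_zero]))
    have : (algebraMap D₁ F₁) (β₁ y) ≠ 0 := fun h =>
      this ((IsFractionRing.injective D₁ F₁) (by rwa [map_zero]))
    exact isUnit_iff_ne_zero.2 this
  have hu₂ : ∀ y : nonZeroDivisors A, IsUnit (((algebraMap D₂ F₂).comp β₂) y) := by
    rintro ⟨y, hy⟩
    have hyne : y ≠ 0 := nonZeroDivisors.ne_zero hy
    have : β₂ y ≠ 0 := fun h => hyne (h₂ (by rwa [map_zero]))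
    have : (algebraMap D₂ F₂) (β₂ y) ≠ 0 := fun h =>
      this ((IsFractionRing.injective D₂ F₂) (by rwa [map_zero]))
    exact isUnit_iff_ne_zero.2 this
  let κ₁ : K →+* F₁ := IsLocalization.lift (M := nonZeroDivisors A) hu₁
  let κ₂ : K →+* F₂ := IsLocalization.lift (M := nonZeroDivisors A) hu₂
  letI : Algebra K F₁ := κ₁.toAlgebra
  letI : Algebra K F₂ := κ₂.toAlgebra
  let G := TensorProduct K F₁ F₂
  -- G is nontrivial
  let b₁ := Module.Basis.ofVectorSpace K F₁
  let b₂ := Module.Basis.ofVectorSpace K F₂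
  let b := b₁.tensorProduct b₂
  have hne₁ : Nonempty (Module.Basis.ofVectorSpaceIndex K F₁) := Module.Basis.index_nonempty b₁
  have hne₂ : Nonempty (Module.Basis.ofVectorSpaceIndex K F₂) := Module.Basis.index_nonempty b₂
  obtain ⟨i₁⟩ := hne₁
  obtain ⟨i₂⟩ := hne₂
  haveI : Nontrivial G := nontrivial_of_ne (b (i₁, i₂)) 0 (b.ne_zero _)
  refine ⟨G, inferInstance, inferInstance,
    (Algebra.TensorProduct.includeLeft (R := K) (S := K)).toRingHom.comp (algebraMap D₁ F₁),
    (Algebra.TensorProduct.includeRight (R := K)).toRingHom.comp (algebraMap D₂ F₂), ?_⟩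
  ext a
  have e₁ : (algebraMap D₁ F₁) (β₁ a) = algebraMap K F₁ (algebraMap A K a) := by
    show _ = κ₁ (algebraMap A K a)
    rw [IsLocalization.lift_eq]
    rfl
  have e₂ : (algebraMap D₂ F₂) (β₂ a) = algebraMap K F₂ (algebraMap A K a) := by
    show _ = κ₂ (algebraMap A K a)
    rw [IsLocalization.lift_eq]
    rfl
  simp only [RingHom.comp_apply, AlgHom.toRingHom_eq_coe, RingHom.coe_coe, e₁, e₂]
  rw [Algebra.TensorProduct.includeLeft.commutes, Algebra.TensorProduct.includeRight.commutes]

open MvPolynomial in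
lemma rel1_mem_q (i j : Fin n) :
    ((∑ l, X (.inl (i,l)) * X (.inr (l,j) : GVar n)) - C (if i = j then (1:ℂ) else 0))
      ∈ qIdeal n := by
  rw [qIdeal, mem_vanishingIdeal_iff]
  simp only [MvPolynomial.aeval_eq_eval]
  intro v hv
  have h1 : gmat v * hmat v = 1 := hv.1
  have h2 := congrFun (congrFun (congrArg (fun M => (M : Matrix (Fin n) (Fin n) ℂ)) h1) i) j
  simp only [Matrix.mul_apply, Matrix.one_apply] at h2
  simp only [map_sub, map_sum, eval_mul, eval_X, eval_C]
  rw [sub_eq_zero, ← h2]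
  rfl

open MvPolynomial in
lemma rel2_mem_q (i j : Fin n) :
    ((∑ l, X (.inr (i,l)) * X (.inl (l,j) : GVar n)) - C (if i = j then (1:ℂ) else 0))
      ∈ qIdeal n := by
  rw [qIdeal, mem_vanishingIdeal_iff]
  simp only [MvPolynomial.aeval_eq_eval]
  intro v hv
  have h1 : hmat v * gmat v = 1 := hv.2
  have h2 := congrFun (congrFun (congrArg (fun M => (M : Matrix (Fin n) (Fin n) ℂ)) h1) i) j
  simp only [Matrix.mul_apply, Matrix.one_apply] at h2
  simp only [map_sub, map_sum, eval_mul, eval_X, eval_C]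
  rw [sub_eq_zero, ← h2]
  rfl

open MvPolynomial in
lemma mem_Xgl_of_q_vanish (y : GVar n → ℂ) (hy : ∀ p ∈ qIdeal n, eval y p = 0) :
    y ∈ Xgl n := by
  constructor
  · ext i j
    have := hy _ (rel1_mem_q i j)
    simp only [map_sub, map_sum, eval_mul, eval_X, eval_C, sub_eq_zero] at this
    rw [Matrix.mul_apply, Matrix.one_apply]
    exact this
  · ext i j
    have := hy _ (rel2_mem_q i j)
    simp only [map_sub, map_sum, eval_mul, eval_X, eval_C, sub_eq_zero] at this
    rw [Matrix.mul_apply, Matrix.one_apply]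
    exact this

open MvPolynomial in
lemma eval₂Hom_comp_ringHom {T : Type} [CommRing T] (ρ : MvPolynomial (GVar n) ℂ →+* T) :
    eval₂Hom (ρ.comp (MvPolynomial.C : ℂ →+* MvPolynomial (GVar n) ℂ))
      (fun u => ρ (X u)) = ρ := by
  apply MvPolynomial.ringHom_ext <;> simp

open MvPolynomial in
lemma equiv_of_VI_eq {B B' : Bil n} (h : VI B = VI B') : EquivStr B B' := by
  classical
  haveI hq := qIdeal_prime n
  haveI : IsDomain (MvPolynomial (GVar n) ℂ ⧸ qIdeal n) :=
    (Ideal.Quotient.isDomain_iff_prime (qIdeal n)).2 hq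
  have hVIp : (VI (n := n) B).IsPrime := by
    rw [← ker_toD]
    exact RingHom.ker_isPrime (toD B)
  haveI : IsDomain (MvPolynomial (Fin n × Fin n × Fin n) ℂ ⧸ VI B) :=
    (Ideal.Quotient.isDomain_iff_prime _).2 hVIp
  -- the two injections
  have hle₁ : ∀ a ∈ VI (n := n) B, toD B a = 0 := by
    intro a ha
    rw [← ker_toD] at ha
    exact ha
  have hle₂ : ∀ a ∈ VI (n := n) B, toD B' a = 0 := by
    intro a ha
    rw [h, ← ker_toD] at ha
    exact ha
  let β₁ := Ideal.Quotient.lift (VI (n := n) B) (toD B) hle₁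
  let β₂ := Ideal.Quotient.lift (VI (n := n) B) (toD B') hle₂
  have hβ₁ : Function.Injective β₁ := by
    rw [RingHom.injective_iff_ker_eq_bot]
    rw [eq_bot_iff]
    rintro x hx
    obtain ⟨p, rfl⟩ := Ideal.Quotient.mk_surjective x
    rw [RingHom.mem_ker, Ideal.Quotient.lift_mk, ← RingHom.mem_ker, ker_toD] at hx
    simpa [Submodule.mem_bot, Ideal.Quotient.eq_zero_iff_mem] using hx
  have hβ₂ : Function.Injective β₂ := by
    rw [RingHom.injective_iff_ker_eq_bot]
    rw [eq_bot_iff]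
    rintro x hx
    obtain ⟨p, rfl⟩ := Ideal.Quotient.mk_surjective x
    rw [RingHom.mem_ker, Ideal.Quotient.lift_mk, ← RingHom.mem_ker, ker_toD, ← h] at hx
    simpa [Submodule.mem_bot, Ideal.Quotient.eq_zero_iff_mem] using hx
  obtain ⟨T, _, _, χ₁, χ₂, hχ⟩ := tens_exists _ _ _ β₁ β₂ hβ₁ hβ₂
  -- the combined evaluation map
  let ρ₁ : MvPolynomial (GVar n) ℂ →+* T := χ₁.comp (Ideal.Quotient.mk (qIdeal n))
  let ρ₂ : MvPolynomial (GVar n) ℂ →+* T := χ₂.comp (Ideal.Quotient.mk (qIdeal n))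
  let Φ : MvPolynomial (GVar n ⊕ GVar n) ℂ →+* T :=
    eval₂Hom (ρ₁.comp (MvPolynomial.C : ℂ →+* MvPolynomial (GVar n) ℂ))
      (Sum.elim (fun u => ρ₁ (X u)) (fun u => ρ₂ (X u)))
  have hΦl : ∀ p, Φ (rename Sum.inl p) = ρ₁ p := by
    intro p
    show eval₂Hom _ _ (rename Sum.inl p) = _
    rw [eval₂Hom_rename]
    have : (Sum.elim (fun u => ρ₁ (X u)) (fun u => ρ₂ (X u))) ∘ Sum.inl
        = fun u => ρ₁ (X u) := rfl
    rw [this]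
    exact congrFun (congrArg _ (eval₂Hom_comp_ringHom ρ₁)) p
  have hΦr : ∀ p, Φ (rename Sum.inr p) = ρ₂ p := by
    intro p
    show eval₂Hom _ _ (rename Sum.inr p) = _
    rw [eval₂Hom_rename]
    have heq : (ρ₁.comp (MvPolynomial.C : ℂ →+* MvPolynomial (GVar n) ℂ))
        = (ρ₂.comp (MvPolynomial.C : ℂ →+* MvPolynomial (GVar n) ℂ)) := by
      ext c
      show χ₁ (Ideal.Quotient.mk _ (MvPolynomial.C c)) = χ₂ (Ideal.Quotient.mk _ (MvPolynomial.C c))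
      have l₁ : (Ideal.Quotient.mk (qIdeal n)) (MvPolynomial.C c)
          = toD B (MvPolynomial.C c) := by
        show _ = (Ideal.Quotient.mk (qIdeal n)) (aeval (fpoly B) (MvPolynomial.C c))
        rw [aeval_C]
        rfl
      have l₂ : (Ideal.Quotient.mk (qIdeal n)) (MvPolynomial.C c)
          = toD B' (MvPolynomial.C c) := by
        show _ = (Ideal.Quotient.mk (qIdeal n)) (aeval (fpoly B') (MvPolynomial.C c))
        rw [aeval_C]
        rfl
      conv_lhs => rw [l₁]
      conv_rhs => rw [l₂]
      have hb₁ : toD B (MvPolynomial.C c) = β₁ (Ideal.Quotient.mk _ (MvPolynomial.C c)) :=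
        (Ideal.Quotient.lift_mk _ _ _).symm
      have hb₂ : toD B' (MvPolynomial.C c) = β₂ (Ideal.Quotient.mk _ (MvPolynomial.C c)) :=
        (Ideal.Quotient.lift_mk _ _ _).symm
      rw [hb₁, hb₂]
      exact congrFun (congrArg (fun (F : _ →+* T) => (F : _ → T)) hχ) _
    rw [heq]
    have : (Sum.elim (fun u => ρ₁ (X u)) (fun u => ρ₂ (X u))) ∘ Sum.inr
        = fun u => ρ₂ (X u) := rfl
    rw [this]
    exact congrFun (congrArg _ (eval₂Hom_comp_ringHom ρ₂)) p
  -- the glued ideal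
  let J : Ideal (MvPolynomial (GVar n ⊕ GVar n) ℂ) :=
    Ideal.span ((rename Sum.inl '' (qIdeal n : Set (MvPolynomial (GVar n) ℂ)))
      ∪ (rename Sum.inr '' (qIdeal n : Set (MvPolynomial (GVar n) ℂ)))
      ∪ Set.range (fun k : Fin n × Fin n × Fin n =>
          rename Sum.inl (fpoly B k) - rename Sum.inr (fpoly B' k)))
  have hJker : J ≤ RingHom.ker Φ := by
    rw [Ideal.span_le]
    rintro x ((⟨p, hp, rfl⟩ | ⟨p, hp, rfl⟩) | ⟨k, rfl⟩)
    · rw [SetLike.mem_coe, RingHom.mem_ker, hΦl]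
      show χ₁ (Ideal.Quotient.mk _ p) = 0
      rw [Ideal.Quotient.eq_zero_iff_mem.2 hp, map_zero]
    · rw [SetLike.mem_coe, RingHom.mem_ker, hΦr]
      show χ₂ (Ideal.Quotient.mk _ p) = 0
      rw [Ideal.Quotient.eq_zero_iff_mem.2 hp, map_zero]
    · rw [SetLike.mem_coe, RingHom.mem_ker, map_sub, hΦl, hΦr]
      have l₁ : (Ideal.Quotient.mk (qIdeal n)) (fpoly B k) = toD B (X k) := by
        show _ = (Ideal.Quotient.mk (qIdeal n)) (aeval (fpoly B) (X k))
        rw [aeval_X]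
      have l₂ : (Ideal.Quotient.mk (qIdeal n)) (fpoly B' k) = toD B' (X k) := by
        show _ = (Ideal.Quotient.mk (qIdeal n)) (aeval (fpoly B') (X k))
        rw [aeval_X]
      show χ₁ (Ideal.Quotient.mk _ (fpoly B k)) - χ₂ (Ideal.Quotient.mk _ (fpoly B' k)) = 0
      rw [l₁, l₂, sub_eq_zero]
      have hb₁ : toD B (X k) = β₁ (Ideal.Quotient.mk _ (X k)) :=
        (Ideal.Quotient.lift_mk _ _ _).symm
      have hb₂ : toD B' (X k) = β₂ (Ideal.Quotient.mk _ (X k)) :=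
        (Ideal.Quotient.lift_mk _ _ _).symm
      rw [hb₁, hb₂]
      exact congrFun (congrArg (fun (F : _ →+* T) => (F : _ → T)) hχ) _
  have hJne : J ≠ ⊤ := by
    intro hJ
    have h1 : (1 : MvPolynomial (GVar n ⊕ GVar n) ℂ) ∈ J := hJ ▸ Submodule.mem_top
    have := hJker h1
    rw [RingHom.mem_ker, map_one] at this
    exact one_ne_zero this
  obtain ⟨M, hM, hJM⟩ := Ideal.exists_le_maximal J hJne
  obtain ⟨x₀, hx₀⟩ := (isMaximal_iff_eq_vanishingIdeal_singleton (I := M)).1 hM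
  have hvanish : ∀ p ∈ J, eval x₀ p = 0 := by
    intro p hp
    have := hJM hp
    rw [hx₀, mem_vanishingIdeal_singleton_iff] at this
    simp only [MvPolynomial.aeval_eq_eval] at this
    exact this
  set y : GVar n → ℂ := x₀ ∘ Sum.inl with hy
  set y' : GVar n → ℂ := x₀ ∘ Sum.inr with hy'
  have hyX : y ∈ Xgl n := by
    apply mem_Xgl_of_q_vanish
    intro p hp
    have := hvanish _ (Ideal.subset_span (Or.inl (Or.inl ⟨p, hp, rfl⟩)))
    rwa [eval_rename] at this
  have hy'X : y' ∈ Xgl n := by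
    apply mem_Xgl_of_q_vanish
    intro p hp
    have := hvanish _ (Ideal.subset_span (Or.inl (Or.inr ⟨p, hp, rfl⟩)))
    rwa [eval_rename] at this
  have hsame : ∀ k, eval y (fpoly B k) = eval y' (fpoly B' k) := by
    intro k
    have := hvanish _ (Ideal.subset_span (Or.inr ⟨k, rfl⟩))
    rwa [map_sub, eval_rename, eval_rename, sub_eq_zero] at this
  have hCC : act (gmat y) (hmat y) B = act (gmat y') (hmat y') B' := by
    apply toPt_injective
    funext k
    rw [← eval_fpoly, ← eval_fpoly, hsame]
  have hEB : EquivStr (act (gmat y) (hmat y) B) B :=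
    equivStr_iff_act.2 ⟨gmat y, hmat y, hyX.1, hyX.2, rfl⟩
  have hEB' : EquivStr (act (gmat y') (hmat y') B') B' :=
    equivStr_iff_act.2 ⟨gmat y', hmat y', hy'X.1, hy'X.2, rfl⟩
  exact equiv_trans (equiv_symm hEB) (hCC ▸ hEB')

/- ------------ group 5 : construction ------------- -/

lemma VI_eq_of_equiv {B C : Bil n} (h : EquivStr B C) : VI B = VI C := by
  unfold VI pts
  rw [orbit_eq_of_equiv h]

lemma main_aux {B B' B'' : Bil n}
    (g1 : ℂ → ((Fin n → ℂ) ≃ₗ[ℂ] (Fin n → ℂ))) (L1 : Bil n)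
    (hg1 : ∀ x y, Tendsto (fun t : ℂ => (g1 t).symm (B' (g1 t x) (g1 t y)))
      (𝓝[≠] (0 : ℂ)) (𝓝 (L1 x y)))
    (hL1 : EquivStr L1 B) (hn1 : ¬ EquivStr B B')
    (g2 : ℂ → ((Fin n → ℂ) ≃ₗ[ℂ] (Fin n → ℂ))) (L2 : Bil n)
    (hg2 : ∀ x y, Tendsto (fun t : ℂ => (g2 t).symm (B'' (g2 t x) (g2 t y)))
      (𝓝[≠] (0 : ℂ)) (𝓝 (L2 x y)))
    (hL2 : EquivStr L2 B') (hn2 : ¬ EquivStr B' B'') :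
    ∃ g : ℂ → ((Fin n → ℂ) ≃ₗ[ℂ] (Fin n → ℂ)),
      ∃ L : Bil n,
        (∀ x y, Tendsto (fun t : ℂ => (g t).symm (B'' (g t x) (g t y)))
            (𝓝[≠] (0 : ℂ)) (𝓝 (L x y)))
          ∧ EquivStr L B ∧ ¬ EquivStr B B'' := by
  classical
  -- Part 1: the non-equivalence, via vanishing ideals of orbit closures
  have hnBB'' : ¬ EquivStr B B'' := by
    intro hBB''
    have hle1 : VI B' ≤ VI B := VI_le_of_closure (toPt_mem_closure g1 hg1) hL1
    have hle2 : VI B'' ≤ VI B' := VI_le_of_closure (toPt_mem_closure g2 hg2) hL2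
    have hVIeq : VI B = VI B'' := VI_eq_of_equiv hBB''
    have : VI B = VI B' := le_antisymm (hVIeq ▸ hle2) hle1
    exact hn1 (equiv_of_VI_eq this)
  -- Part 2: the composed family of automorphisms
  obtain ⟨φ, hφ⟩ := hL2
  let γ : ℂ → ℂ → ((Fin n → ℂ) ≃ₗ[ℂ] (Fin n → ℂ)) :=
    fun s t => (g1 s).trans (φ.symm.trans (g2 t))
  have hγ_apply : ∀ s t x, γ s t x = g2 t (φ.symm (g1 s x)) := by
    intro s t x
    simp [γ, LinearEquiv.trans_apply]
  have hγ_symm : ∀ s t z, (γ s t).symm z = (g1 s).symm (φ ((g2 t).symm z)) := by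
    intro s t z
    simp [γ, LinearEquiv.symm_trans_apply]
  have stepA : ∀ (s : ℂ) (x y : Fin n → ℂ),
      Tendsto (fun t : ℂ => (γ s t).symm (B'' (γ s t x) (γ s t y))) (𝓝[≠] (0:ℂ))
        (𝓝 ((g1 s).symm (B' (g1 s x) (g1 s y)))) := by
    intro s x y
    set u := φ.symm (g1 s x) with hu
    set v := φ.symm (g1 s y) with hv
    let ψ : (Fin n → ℂ) →ₗ[ℂ] (Fin n → ℂ) :=
      (g1 s).symm.toLinearMap ∘ₗ φ.toLinearMap
    have hψc : Continuous ψ := ψ.continuous_of_finiteDimensional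
    have hcomp' : Tendsto (fun t : ℂ => ψ ((g2 t).symm (B'' (g2 t u) (g2 t v))))
        (𝓝[≠] (0:ℂ)) (𝓝 (ψ (L2 u v))) :=
      (hψc.tendsto (L2 u v)).comp (hg2 u v)
    have heqf : (fun t : ℂ => ψ ((g2 t).symm (B'' (g2 t u) (g2 t v))))
        = fun t : ℂ => (γ s t).symm (B'' (γ s t x) (γ s t y)) := by
      funext t
      show (g1 s).symm (φ ((g2 t).symm (B'' (g2 t u) (g2 t v)))) = _
      rw [hγ_symm, hγ_apply, hγ_apply]
    have heqv : ψ (L2 u v) = (g1 s).symm (B' (g1 s x) (g1 s y)) := by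
      show (g1 s).symm (φ (L2 u v)) = _
      rw [hφ u v, hu, hv, φ.apply_symm_apply, φ.apply_symm_apply]
    rw [heqf, heqv] at hcomp'
    exact hcomp'
  have hsel : ∀ s : ℂ, s ≠ 0 → ∃ t : ℂ,
      ∀ i j : Fin n, ‖(γ s t).symm (B'' (γ s t (ee i)) (γ s t (ee j)))
        - (g1 s).symm (B' (g1 s (ee i)) (g1 s (ee j)))‖ < ‖s‖ := by
    intro s hs
    have hpos : 0 < ‖s‖ := norm_pos_iff.2 hs
    have hev : ∀ᶠ t in 𝓝[≠] (0:ℂ), ∀ i j : Fin n,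
        ‖(γ s t).symm (B'' (γ s t (ee i)) (γ s t (ee j)))
          - (g1 s).symm (B' (g1 s (ee i)) (g1 s (ee j)))‖ < ‖s‖ := by
      rw [eventually_all]
      intro i
      rw [eventually_all]
      intro j
      have := Metric.tendsto_nhds.1 (stepA s (ee i) (ee j)) (‖s‖) hpos
      filter_upwards [this] with t ht
      rwa [dist_eq_norm] at ht
    exact hev.exists
  let tsel : ℂ → ℂ := fun s => if hs : s ≠ 0 then (hsel s hs).choose else 1
  have htsel : ∀ (s : ℂ) (hs : s ≠ 0), ∀ i j : Fin n,
      ‖(γ s (tsel s)).symm (B'' (γ s (tsel s) (ee i)) (γ s (tsel s) (ee j)))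
        - (g1 s).symm (B' (g1 s (ee i)) (g1 s (ee j)))‖ < ‖s‖ := by
    intro s hs i j
    have h0 : tsel s = (hsel s hs).choose := by
      simp only [tsel]
      rw [dif_pos hs]
    rw [h0]
    exact (hsel s hs).choose_spec i j
  refine ⟨fun s => γ s (tsel s), L1, ?_, hL1, hnBB''⟩
  have hbasis : ∀ i j : Fin n,
      Tendsto (fun s : ℂ =>
          (γ s (tsel s)).symm (B'' (γ s (tsel s) (ee i)) (γ s (tsel s) (ee j))))
        (𝓝[≠] (0:ℂ)) (𝓝 (L1 (ee i) (ee j))) := by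
    intro i j
    have hdiff : Tendsto (fun s : ℂ =>
        (γ s (tsel s)).symm (B'' (γ s (tsel s) (ee i)) (γ s (tsel s) (ee j)))
          - (g1 s).symm (B' (g1 s (ee i)) (g1 s (ee j)))) (𝓝[≠] (0:ℂ)) (𝓝 0) := by
      have hA : ∀ᶠ s in 𝓝[≠] (0:ℂ),
          ‖(γ s (tsel s)).symm (B'' (γ s (tsel s) (ee i)) (γ s (tsel s) (ee j)))
            - (g1 s).symm (B' (g1 s (ee i)) (g1 s (ee j)))‖ ≤ ‖s‖ := by
        filter_upwards [self_mem_nhdsWithin] with s hs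
        exact le_of_lt (htsel s hs i j)
      have h1 : Tendsto (fun s : ℂ => ‖s‖) (𝓝 (0:ℂ)) (𝓝 ‖(0:ℂ)‖) :=
        (continuous_norm).tendsto 0
      rw [norm_zero] at h1
      exact squeeze_zero_norm' hA (h1.mono_left nhdsWithin_le_nhds)
    have hsum := hdiff.add (hg1 (ee i) (ee j))
    rw [zero_add] at hsum
    have hre : (fun s : ℂ =>
        ((γ s (tsel s)).symm (B'' (γ s (tsel s) (ee i)) (γ s (tsel s) (ee j)))
          - (g1 s).symm (B' (g1 s (ee i)) (g1 s (ee j))))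
          + (g1 s).symm (B' (g1 s (ee i)) (g1 s (ee j))))
        = fun s : ℂ =>
          (γ s (tsel s)).symm (B'' (γ s (tsel s) (ee i)) (γ s (tsel s) (ee j))) := by
      funext s
      rw [sub_add_cancel]
    rwa [hre] at hsum
  intro x y
  have hfun : (fun s : ℂ => (γ s (tsel s)).symm (B'' (γ s (tsel s) x) (γ s (tsel s) y)))
      = fun s : ℂ => ∑ i, ∑ j, (x i * y j) •
          (γ s (tsel s)).symm (B'' (γ s (tsel s) (ee i)) (γ s (tsel s) (ee j))) := by
    funext s
    have hb := bil_expand (conjB (γ s (tsel s)) B'') x y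
    simpa [conjB_apply] using hb
  rw [hfun, bil_expand L1 x y]
  apply tendsto_finset_sum
  intro i _
  apply tendsto_finset_sum
  intro j _
  exact (hbasis i j).const_smul _

end CtrAux

theorem contraction_transitive {n : ℕ}
    (B B' B'' : (Fin n → ℂ) →ₗ[ℂ] (Fin n → ℂ) →ₗ[ℂ] (Fin n → ℂ))
    (hB : IsLieStr B) (hB' : IsLieStr B') (hB'' : IsLieStr B'')
    (h1 : IsContractionOf B' B) (h2 : IsContractionOf B'' B') :
    IsContractionOf B'' B := by
  obtain ⟨g1, L1, hg1, hL1, hn1⟩ := h1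
  obtain ⟨g2, L2, hg2, hL2, hn2⟩ := h2
  exact CtrAux.main_aux g1 L1 hg1 hL1 hn1 g2 L2 hg2 hL2 hn2
end

section
/- The 3-dimensional complex Lie algebra with brackets [w₁,w₃] = λw₁ + w₂, [w₂,w₃] = μw₂ (denoted d₂(λ:μ)) is isomorphic to d₂(μ:λ) for all (λ,μ) ≠ (0,0). -/
/- STATEMENT 9: The 3-dimensional complex Lie algebra `d₂(λ:μ)` with brackets
`[w₁,w₃] = λw₁ + w₂`, `[w₂,w₃] = μw₂` (all other brackets zero) is isomorphic to
`d₂(μ:λ)` for all `(λ,μ) ≠ (0,0)`. -/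

/-- The bracket of `d₂(λ:μ)` on `ℂ³` (basis `w₁ = e₀, w₂ = e₁, w₃ = e₂`):
`[w₁,w₃] = λw₁ + w₂`, `[w₂,w₃] = μw₂`. -/
def d2 (l m : ℂ) (x y : Fin 3 → ℂ) : Fin 3 → ℂ :=
  ![l * (x 0 * y 2 - x 2 * y 0),
    (x 0 * y 2 - x 2 * y 0) + m * (x 1 * y 2 - x 2 * y 1),
    0]

/-! In `d₂(μ:λ)` the vectors `w₁`, `w₂ + (μ - λ)w₁`, `w₃` satisfy the defining brackets of
`d₂(λ:μ)`, so the shear `w₂ ↦ w₂ + (μ - λ)w₁` fixing `w₁` and `w₃` is an isomorphism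
`d₂(λ:μ) → d₂(μ:λ)`. -/

@[simps]
def shear {R : Type*} [CommRing R] (c : R) : (Fin 3 → R) ≃ₗ[R] (Fin 3 → R) where
  toFun x := ![x 0 + c * x 1, x 1, x 2]
  invFun x := ![x 0 - c * x 1, x 1, x 2]
  map_add' x y := by funext i; fin_cases i <;> simp [mul_add, add_add_add_comm]
  map_smul' a x := by funext i; fin_cases i <;> simp [mul_add, mul_left_comm]
  left_inv x := by funext i; fin_cases i <;> simp
  right_inv x := by funext i; fin_cases i <;> simp

theorem shear_d2 (l m : ℂ) (x y : Fin 3 → ℂ) :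
    shear (m - l) (d2 l m x y) = d2 m l (shear (m - l) x) (shear (m - l) y) := by
  funext i
  fin_cases i <;> simp [d2] <;> ring

theorem d2_swap_isomorphic_general (l m : ℂ) :
    ∃ g : (Fin 3 → ℂ) ≃ₗ[ℂ] (Fin 3 → ℂ),
      ∀ x y, g (d2 l m x y) = d2 m l (g x) (g y) :=
  ⟨shear (m - l), shear_d2 l m⟩

theorem d2_swap_isomorphic (l m : ℂ) (h : ¬(l = 0 ∧ m = 0)) :
    ∃ g : (Fin 3 → ℂ) ≃ₗ[ℂ] (Fin 3 → ℂ),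
      ∀ x y, g (d2 l m x y) = d2 m l (g x) (g y) :=
  d2_swap_isomorphic_general l m
end

section
/- The 3-dimensional complex Lie algebras d₂(λ:μ) and d₂(λ':μ') with λ ≠ μ and λ' ≠ μ' are isomorphic if and only if (λ':μ') = (λ:μ) or (λ':μ') = (μ:λ) as points of ℙ¹(ℂ). -/
open Matrix


/-- An explicit linear automorphism of `ℂ³` used to realize the isomorphisms. -/
noncomputable def d2Equiv (e t : ℂ) (ht : t ≠ 0) : (Fin 3 → ℂ) ≃ₗ[ℂ] (Fin 3 → ℂ) where
  toFun x := ![x 0 + e * x 1, x 1 / t, x 2 / t]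
  invFun y := ![y 0 - e * t * y 1, t * y 1, t * y 2]
  map_add' x y := by funext i; fin_cases i <;> simp <;> ring
  map_smul' c x := by funext i; fin_cases i <;> simp <;> ring
  left_inv x := by
    funext i; fin_cases i <;> simp <;> (try field_simp) <;> (try ring)
  right_inv y := by
    funext i; fin_cases i <;> simp <;> (try field_simp) <;> (try ring)

lemma d2Equiv_apply (e t : ℂ) (ht : t ≠ 0) (x : Fin 3 → ℂ) :
    d2Equiv e t ht x = ![x 0 + e * x 1, x 1 / t, x 2 / t] := rfl

lemma trace_eq_of_conj (G A B : Matrix (Fin 3) (Fin 3) ℂ) (hdet : IsUnit G.det)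
    (hk : G * A = B * G) : A.trace = B.trace := by
  have hA : A = G⁻¹ * (B * G) := by
    rw [← hk, ← Matrix.mul_assoc, Matrix.nonsing_inv_mul _ hdet, Matrix.one_mul]
  rw [hA, Matrix.trace_mul_comm, Matrix.mul_assoc, Matrix.mul_nonsing_inv _ hdet,
    Matrix.mul_one]

theorem d2_isomorphism_classification (l m l' m' : ℂ) (h : l ≠ m) (h' : l' ≠ m') :
    (∃ g : (Fin 3 → ℂ) ≃ₗ[ℂ] (Fin 3 → ℂ),
        ∀ x y, g (d2 l m x y) = d2 l' m' (g x) (g y))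
      ↔ ∃ t : ℂ, t ≠ 0 ∧ ((l' = t * l ∧ m' = t * m) ∨ (l' = t * m ∧ m' = t * l)) := by
  constructor
  · rintro ⟨g, hg⟩
    set p : ℂ := g ![0,0,1] 0 with hp
    set q : ℂ := g ![0,0,1] 1 with hq
    set c : ℂ := g ![0,0,1] 2 with hc
    set M : Matrix (Fin 3) (Fin 3) ℂ := !![l, 0, 0; 1, m, 0; 0, 0, 0] with hM
    set M' : Matrix (Fin 3) (Fin 3) ℂ :=
      !![l' * c, 0, -(l' * p); c, m' * c, -(p + m' * q); 0, 0, 0] with hM'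
    set G : Matrix (Fin 3) (Fin 3) ℂ :=
      LinearMap.toMatrix' (g : (Fin 3 → ℂ) →ₗ[ℂ] (Fin 3 → ℂ)) with hG
    have hGv : ∀ x, G *ᵥ x = g x := by
      intro x
      rw [hG, ← Matrix.toLin'_apply, Matrix.toLin'_toMatrix']
      rfl
    have hMx : ∀ x : Fin 3 → ℂ, M *ᵥ x = d2 l m x ![0,0,1] := by
      intro x
      funext i
      fin_cases i <;>
        simp [hM, d2, Matrix.mulVec, dotProduct, Fin.sum_univ_three] <;> ring
    have hM'x : ∀ y : Fin 3 → ℂ, M' *ᵥ y = d2 l' m' y (g ![0,0,1]) := by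
      intro y
      funext i
      fin_cases i <;>
        simp [hM', d2, hp, hq, hc, Matrix.mulVec, dotProduct, Fin.sum_univ_three] <;>
        ring
    have h2 : ∀ x, G *ᵥ (M *ᵥ x) = M' *ᵥ (G *ᵥ x) := by
      intro x
      rw [hGv, hMx, hGv, hM'x]
      exact hg x ![0,0,1]
    have key : G * M = M' * G := by
      ext i j
      have h3 := congrFun (h2 (Pi.single j 1)) i
      rw [Matrix.mulVec_mulVec, Matrix.mulVec_mulVec, Matrix.mulVec_single_one,
        Matrix.mulVec_single_one] at h3
      exact h3
    have hdet : IsUnit G.det := by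
      have h1 : G * LinearMap.toMatrix' (g.symm : (Fin 3 → ℂ) →ₗ[ℂ] (Fin 3 → ℂ)) = 1 := by
        rw [hG, ← LinearMap.toMatrix'_comp]
        have : (g : (Fin 3 → ℂ) →ₗ[ℂ] (Fin 3 → ℂ)).comp
            (g.symm : (Fin 3 → ℂ) →ₗ[ℂ] (Fin 3 → ℂ)) = LinearMap.id := by
          ext x i
          simp
        rw [this, LinearMap.toMatrix'_id]
      exact Matrix.isUnit_det_of_right_inverse h1
    have key2 : G * (M * M) = (M' * M') * G := by
      rw [← Matrix.mul_assoc, key, Matrix.mul_assoc, key, ← Matrix.mul_assoc]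
    have e1 : l + m = c * (l' + m') := by
      have := trace_eq_of_conj G M M' hdet key
      simp [hM, hM', Matrix.trace_fin_three, Matrix.vecHead, Matrix.vecTail] at this
      linear_combination this
    have e2 : l * l + m * m = c^2 * (l'*l' + m'*m') := by
      have := trace_eq_of_conj G (M * M) (M' * M') hdet key2
      simp [hM, hM', Matrix.trace_fin_three, Matrix.mul_apply, Fin.sum_univ_three, Matrix.vecHead, Matrix.vecTail] at this
      linear_combination this
    have hc0 : c ≠ 0 := by
      intro h0
      rw [h0] at e1 e2
      have hm : m = -l := by linear_combination e1
      have hl2 : l * l = 0 := by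
        rw [hm] at e2; linear_combination e2 / 2
      have hl : l = 0 := by
        rcases mul_eq_zero.mp hl2 with h1 | h1 <;> exact h1
      apply h
      rw [hl, hm, hl, neg_zero]
    have hfac : (c * l' - l) * (c * l' - m) = 0 := by
      linear_combination (-(c*l') + (l + m + c*(l'+m'))/2) * e1 - (1/2) * e2
    have hinv : ∀ a b : ℂ, c * a = b → a = c⁻¹ * b := by
      intro a b hab
      rw [← hab, ← mul_assoc, inv_mul_cancel₀ hc0, one_mul]
    refine ⟨c⁻¹, inv_ne_zero hc0, ?_⟩
    rcases mul_eq_zero.mp hfac with h1 | h1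
    · exact Or.inl ⟨hinv _ _ (by linear_combination h1),
        hinv _ _ (by linear_combination -e1 - h1)⟩
    · exact Or.inr ⟨hinv _ _ (by linear_combination h1),
        hinv _ _ (by linear_combination -e1 - h1)⟩
  · rintro ⟨t, ht, hcase | hcase⟩
    · obtain ⟨hl', hm'⟩ := hcase
      subst hl'; subst hm'
      refine ⟨d2Equiv 0 t ht, fun x y => ?_⟩
      funext i
      fin_cases i <;> simp [d2, d2Equiv_apply] <;> field_simp <;> ring
    · obtain ⟨hl', hm'⟩ := hcase
      subst hl'; subst hm'
      refine ⟨d2Equiv (m - l) t ht, fun x y => ?_⟩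
      funext i
      fin_cases i <;> simp [d2, d2Equiv_apply] <;> field_simp <;> ring
end

section
/- The deformation of d₂ (brackets [w₁,w₃] = w₁, [w₂,w₃] = w₂) given by [w₁,w₃] = (1+t₁)w₁ + t₂w₂, [w₂,w₃] = t₃w₁ + w₂ is, for parameter values near 0, isomorphic to d₂(α:β) where α,β = 1 + t₁/2 ± (1/2)√(t₁² + 4t₂t₃); in particular it is isomorphic to d₂(1:1) if and only if t₁² + 4t₂t₃ = 0 and (t₁,t₂,t₃) ≠ (0,0,0). -/
/-- The deformed bracket: `[w₁,w₃] = (1+t₁)w₁ + t₂w₂`, `[w₂,w₃] = t₃w₁ + w₂`. -/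
def defm (t1 t2 t3 : ℂ) (x y : Fin 3 → ℂ) : Fin 3 → ℂ :=
  ![(1 + t1) * (x 0 * y 2 - x 2 * y 0) + t3 * (x 1 * y 2 - x 2 * y 1),
    t2 * (x 0 * y 2 - x 2 * y 0) + (x 1 * y 2 - x 2 * y 1),
    0]

/-- An explicit linear map on `ℂ³` given by a block matrix. -/
def gLin (a b c d k : ℂ) : (Fin 3 → ℂ) →ₗ[ℂ] (Fin 3 → ℂ) where
  toFun x := ![a * x 0 + b * x 1, c * x 0 + d * x 1, k * x 2]
  map_add' x y := by funext i; fin_cases i <;> simp <;> ring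
  map_smul' r x := by funext i; fin_cases i <;> simp <;> ring

/-- Key construction: any invertible block matrix intertwining the structure
constants produces an isomorphism of the brackets. -/
lemma key (t1 t2 t3 l m k a b c d : ℂ) (hk : k ≠ 0) (hD : a * d - b * c ≠ 0)
    (h1 : a * (1 + t1) + b * t2 = k * l * a)
    (h2 : a * t3 + b = k * l * b)
    (h3 : c * (1 + t1) + d * t2 = k * (a + m * c))
    (h4 : c * t3 + d = k * (b + m * d)) :
    ∃ g : (Fin 3 → ℂ) ≃ₗ[ℂ] (Fin 3 → ℂ),
      ∀ x y, g (defm t1 t2 t3 x y) = d2 l m (g x) (g y) := by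
  refine ⟨LinearEquiv.ofLinear (gLin a b c d k)
      (gLin (d/(a*d-b*c)) (-b/(a*d-b*c)) (-c/(a*d-b*c)) (a/(a*d-b*c)) k⁻¹) ?_ ?_, ?_⟩
  · apply LinearMap.ext; intro x; funext i
    fin_cases i <;> simp [gLin] <;> ring_nf at hD ⊢ <;> field_simp <;> ring
  · apply LinearMap.ext; intro x; funext i
    fin_cases i <;> simp [gLin] <;> ring_nf at hD ⊢ <;> field_simp <;> ring
  · intro x y
    show gLin a b c d k (defm t1 t2 t3 x y) = d2 l m (gLin a b c d k x) (gLin a b c d k y)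
    funext i
    fin_cases i <;> simp [gLin, defm, d2]
    · linear_combination (x 0 * y 2 - x 2 * y 0) * h1 + (x 1 * y 2 - x 2 * y 1) * h2
    · linear_combination (x 0 * y 2 - x 2 * y 0) * h3 + (x 1 * y 2 - x 2 * y 1) * h4

/-- First part: the deformation is isomorphic to `d2(α:β)` for the eigenvalues. -/
lemma part1 (t1 t2 t3 s : ℂ) (hnz : ¬(t1 = 0 ∧ t2 = 0 ∧ t3 = 0))
    (hs : s ^ 2 = t1 ^ 2 + 4 * t2 * t3) :
    ∃ g : (Fin 3 → ℂ) ≃ₗ[ℂ] (Fin 3 → ℂ),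
      ∀ x y, g (defm t1 t2 t3 x y)
        = d2 (1 + t1 / 2 + s / 2) (1 + t1 / 2 - s / 2) (g x) (g y) := by
  by_cases h3 : t3 = 0
  · by_cases h2 : t2 = 0
    · have h1 : t1 ≠ 0 := fun h => hnz ⟨h, h2, h3⟩
      subst h2; subst h3
      have hsq : (s - t1) * (s + t1) = 0 := by linear_combination hs
      rcases mul_eq_zero.1 hsq with h | h
      · have hst : s = t1 := by linear_combination h
        refine key t1 0 0 _ _ 1 t1 0 1 1 one_ne_zero (by simpa using h1) ?_ ?_ ?_ ?_ <;>
          rw [hst] <;> ring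
      · have hst : s = -t1 := by linear_combination h
        refine key t1 0 0 _ _ 1 0 (-t1) 1 1 one_ne_zero (by simpa using h1) ?_ ?_ ?_ ?_ <;>
          rw [hst] <;> ring
    · refine key t1 t2 t3 _ _ 1 t2 ((s - t1)/2) 0 1 one_ne_zero (by simpa using h2) ?_ ?_ ?_ ?_
      · ring
      · linear_combination -hs / 4
      · ring
      · ring
  · refine key t1 t2 t3 _ _ 1 ((t1 + s)/2) t3 1 0 one_ne_zero (by simpa using h3) ?_ ?_ ?_ ?_
    · linear_combination -hs / 4
    · ring
    · ring
    · ring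

/-- Backward direction of the `d2(1:1)` characterization. -/
lemma part2back (t1 t2 t3 : ℂ) (hK : (1:ℂ) + t1/2 ≠ 0)
    (h0 : t1 ^ 2 + 4 * t2 * t3 = 0) (hnz : ¬(t1 = 0 ∧ t2 = 0 ∧ t3 = 0)) :
    ∃ g : (Fin 3 → ℂ) ≃ₗ[ℂ] (Fin 3 → ℂ),
      ∀ x y, g (defm t1 t2 t3 x y) = d2 1 1 (g x) (g y) := by
  by_cases h3 : t3 = 0
  · by_cases h2 : t2 = 0
    · exfalso
      have : t1 = 0 := by
        have : t1 ^ 2 = 0 := by rw [h2, h3] at h0; linear_combination h0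
        exact pow_eq_zero_iff (n := 2) (by norm_num) |>.1 this
      exact hnz ⟨this, h2, h3⟩
    · refine key t1 t2 t3 1 1 (1 + t1/2) t2 (-t1/2) 0 (1 + t1/2) hK ?_ ?_ ?_ ?_ ?_
      · have h := mul_ne_zero h2 hK
        intro he; exact h (by linear_combination he)
      · ring
      · linear_combination h0 / 4
      · ring
      · ring
  · refine key t1 t2 t3 1 1 (1 + t1/2) (t1/2) t3 (1 + t1/2) 0 hK ?_ ?_ ?_ ?_ ?_
    · have h := mul_ne_zero h3 hK
      intro he; exact h (by linear_combination -he)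
    · linear_combination h0 / 4
    · ring
    · ring
    · ring

/-- Forward direction of the `d2(1:1)` characterization. -/
lemma part2fwd (t1 t2 t3 : ℂ) (hB : (1:ℂ) + t1 - t2*t3 ≠ 0)
    (g : (Fin 3 → ℂ) ≃ₗ[ℂ] (Fin 3 → ℂ))
    (hg : ∀ x y, g (defm t1 t2 t3 x y) = d2 1 1 (g x) (g y)) :
    t1^2 + 4*t2*t3 = 0 ∧ ¬(t1 = 0 ∧ t2 = 0 ∧ t3 = 0) := by
  have hd1 : defm t1 t2 t3 ![(1:ℂ),0,0] ![(0:ℂ),0,1]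
      = (1+t1) • ![(1:ℂ),0,0] + t2 • ![(0:ℂ),1,0] := by
    funext i; fin_cases i <;> simp [defm]
  have hd2 : defm t1 t2 t3 ![(0:ℂ),1,0] ![(0:ℂ),0,1]
      = t3 • ![(1:ℂ),0,0] + (1:ℂ) • ![(0:ℂ),1,0] := by
    funext i; fin_cases i <;> simp [defm]
  have H1 := hg ![(1:ℂ),0,0] ![(0:ℂ),0,1]
  have H2 := hg ![(0:ℂ),1,0] ![(0:ℂ),0,1]
  rw [hd1, map_add, map_smul, map_smul] at H1
  rw [hd2, map_add, map_smul, map_smul] at H2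
  set u := g ![(1:ℂ),0,0] with hu
  set v := g ![(0:ℂ),1,0] with hv
  set w := g ![(0:ℂ),0,1] with hw
  have e10 := congrFun H1 0
  have e11 := congrFun H1 1
  have e12 := congrFun H1 2
  have e20 := congrFun H2 0
  have e21 := congrFun H2 1
  have e22 := congrFun H2 2
  simp [d2] at e10 e11 e12 e20 e21 e22
  have hu2 : u 2 = 0 := by
    have h := mul_eq_zero.1 (show ((1:ℂ) + t1 - t2 * t3) * u 2 = 0 by
      linear_combination e12 - t2 * e22)
    exact h.resolve_left hB
  have hv2 : v 2 = 0 := by linear_combination e22 - t3 * hu2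
  simp only [hu2, hv2] at e10 e11 e20 e21
  have hκ : w 2 ≠ 0 := by
    obtain ⟨z, hz⟩ := g.surjective ![(0:ℂ),0,1]
    have hzr : z = z 0 • ![(1:ℂ),0,0] + z 1 • ![(0:ℂ),1,0] + z 2 • ![(0:ℂ),0,1] := by
      funext i; fin_cases i <;> simp
    rw [hzr, map_add, map_add, map_smul, map_smul, map_smul, ← hu, ← hv, ← hw] at hz
    have h2z := congrFun hz 2
    simp [hu2, hv2] at h2z
    intro h0
    rw [h0, mul_zero] at h2z
    exact one_ne_zero h2z.symm
  have hD : u 0 * v 1 - u 1 * v 0 ≠ 0 := by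
    intro hD0
    have hz1 : g (v 1 • ![(1:ℂ),0,0] - u 1 • ![(0:ℂ),1,0]) = 0 := by
      rw [map_sub, map_smul, map_smul, ← hu, ← hv]
      funext i; fin_cases i <;> simp [hu2, hv2] <;> (try ring) <;> linear_combination hD0
    have hz2 : g ((-(v 0)) • ![(1:ℂ),0,0] + u 0 • ![(0:ℂ),1,0]) = 0 := by
      rw [map_add, map_smul, map_smul, ← hu, ← hv]
      funext i; fin_cases i <;> simp [hu2, hv2] <;> (try ring) <;> linear_combination hD0
    have hv1 : v 1 = 0 := by
      have := congrFun (g.map_eq_zero_iff.1 hz1) 0; simpa using this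
    have hu1 : u 1 = 0 := by
      have := congrFun (g.map_eq_zero_iff.1 hz1) 1; simpa using this
    have hv0 : v 0 = 0 := by
      have := congrFun (g.map_eq_zero_iff.1 hz2) 0; simpa using this
    have hu0 : u 0 = 0 := by
      have := congrFun (g.map_eq_zero_iff.1 hz2) 1; simpa using this
    have hu0' : u = 0 := by
      funext i; fin_cases i <;> simp [hu0, hu1, hu2]
    rw [hu] at hu0'
    have := g.map_eq_zero_iff.1 hu0'
    have := congrFun this 0
    simpa using this
  have htr : (2 + t1) * (u 0 * v 1 - u 1 * v 0)
      = (2 * w 2) * (u 0 * v 1 - u 1 * v 0) := by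
    linear_combination v 1 * e10 - v 0 * e11 - u 1 * e20 + u 0 * e21
  have hdet : (1 + t1 - t2 * t3) * (u 0 * v 1 - u 1 * v 0)
      = (w 2 * w 2) * (u 0 * v 1 - u 1 * v 0) := by
    linear_combination (t3 * u 1 + v 1) * e10 - (t3 * u 0 + v 0) * e11
      - (w 2 * (u 0 + u 1)) * e20 + (w 2 * u 0) * e21
  have ht : 2 + t1 = 2 * w 2 := mul_right_cancel₀ hD htr
  have hdt : 1 + t1 - t2 * t3 = w 2 * w 2 := mul_right_cancel₀ hD hdet
  refine ⟨by linear_combination (t1 + 2 + 2 * w 2) * ht - 4 * hdt, ?_⟩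
  rintro ⟨rfl, rfl, rfl⟩
  have hκ1 : w 2 = 1 := by linear_combination -ht / 2
  have ha : u 0 = 0 := by linear_combination -e11 - (u 0 + u 1) * hκ1
  have hc : v 0 = 0 := by linear_combination -e21 - (v 0 + v 1) * hκ1
  exact hD (by rw [ha, hc]; ring)

theorem deformation_of_d2_classification :
    ∃ ε : ℝ, 0 < ε ∧ ∀ t1 t2 t3 : ℂ, ‖t1‖ < ε → ‖t2‖ < ε → ‖t3‖ < ε →
      ((¬(t1 = 0 ∧ t2 = 0 ∧ t3 = 0) →
          ∀ s : ℂ, s ^ 2 = t1 ^ 2 + 4 * t2 * t3 →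
            ∃ g : (Fin 3 → ℂ) ≃ₗ[ℂ] (Fin 3 → ℂ),
              ∀ x y, g (defm t1 t2 t3 x y)
                = d2 (1 + t1 / 2 + s / 2) (1 + t1 / 2 - s / 2) (g x) (g y))
        ∧ ((∃ g : (Fin 3 → ℂ) ≃ₗ[ℂ] (Fin 3 → ℂ),
              ∀ x y, g (defm t1 t2 t3 x y) = d2 1 1 (g x) (g y))
            ↔ (t1 ^ 2 + 4 * t2 * t3 = 0 ∧ ¬(t1 = 0 ∧ t2 = 0 ∧ t3 = 0)))) := by
  refine ⟨1/2, by norm_num, ?_⟩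
  intro t1 t2 t3 ht1 ht2 ht3
  have hB : (1:ℂ) + t1 - t2 * t3 ≠ 0 := by
    intro h
    have h1 : ‖t2 * t3 - t1‖ = 1 := by
      rw [show t2 * t3 - t1 = (1:ℂ) from by linear_combination -h]
      simp
    have h2 : ‖t2 * t3 - t1‖ ≤ ‖t2‖ * ‖t3‖ + ‖t1‖ := by
      calc ‖t2 * t3 - t1‖ ≤ ‖t2 * t3‖ + ‖t1‖ := norm_sub_le _ _
      _ = ‖t2‖ * ‖t3‖ + ‖t1‖ := by rw [norm_mul]
    nlinarith [norm_nonneg t1, norm_nonneg t2, norm_nonneg t3]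
  have hK : (1:ℂ) + t1/2 ≠ 0 := by
    intro h
    have h1 : t1 = -2 := by linear_combination 2 * h
    rw [h1] at ht1
    norm_num at ht1
  refine ⟨fun hnz s hs => part1 t1 t2 t3 s hnz hs, ?_, ?_⟩
  · rintro ⟨g, hg⟩
    exact part2fwd t1 t2 t3 hB g hg
  · rintro ⟨h0, hnz⟩
    exact part2back t1 t2 t3 hK h0 hnz
end

section
/- The 4-dimensional complex Lie algebra 𝔯₂(ℂ) ⊕ 𝔯₂(ℂ) has vanishing Chevalley–Eilenberg cohomology H²(𝔤, 𝔤) = 0 with coefficients in the adjoint representation (it is rigid). -/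
/-!
In the standard basis `e₀, …, e₃`, a 2-cocycle `φ` is determined by its values on basis pairs,
and the cocycle identity on the four basis triples forces `φ(e₀,e₂)`, `φ(e₀,e₃)`, `φ(e₁,e₂)`,
`φ(e₁,e₃)` into `span(e₀, e₂)`, with coordinates either determined by `φ(e₀,e₁)` and `φ(e₂,e₃)`
or free. That leaves twelve parameters, as many as the rank `16 - 4` of `λ ↦ δλ` (whose kernel
consists of the derivations, all inner), and a linear map `λ` assembled from them has `δλ = φ`
on every basis pair.
-/

/-- The bracket of `𝔯₂(ℂ) ⊕ 𝔯₂(ℂ)` on `ℂ⁴`: `[w₁,w₂] = w₁`, `[w₃,w₄] = w₃`. -/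
def r2r2 (x y : Fin 4 → ℂ) : Fin 4 → ℂ :=
  ![x 0 * y 1 - x 1 * y 0, 0, x 2 * y 3 - x 3 * y 2, 0]

theorem LinearMap.IsAlt.ext_basis_of_lt {R M N ι : Type*} [CommSemiring R] [AddCommMonoid M]
    [Module R M] [AddCommGroup N] [Module R N] [LinearOrder ι] (b : Module.Basis ι R M)
    {B B' : M →ₗ[R] M →ₗ[R] N} (hB : B.IsAlt) (hB' : B'.IsAlt)
    (h : ∀ i j, i < j → B (b i) (b j) = B' (b i) (b j)) : B = B' := by
  refine ext_basis b b fun i j => ?_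
  rcases lt_trichotomy i j with hij | rfl | hji
  · exact h i j hij
  · rw [hB, hB']
  · rw [← hB.neg, ← hB'.neg, h j i hji]

section Cochains

variable {R M : Type*} [CommSemiring R] [AddCommGroup M] [Module R M]

def coboundary (br : M →ₗ[R] M →ₗ[R] M) (f : M →ₗ[R] M) : M →ₗ[R] M →ₗ[R] M :=
  br.compl₂ f - (br.compl₂ f).flip - br.compr₂ f

@[simp]
theorem coboundary_apply (br : M →ₗ[R] M →ₗ[R] M) (f : M →ₗ[R] M) (x y : M) :
    coboundary br f x y = br x (f y) - br y (f x) - f (br x y) := rfl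

theorem isAlt_coboundary {br : M →ₗ[R] M →ₗ[R] M} (hbr : br.IsAlt) (f : M →ₗ[R] M) :
    (coboundary br f).IsAlt := fun x => by
  rw [coboundary_apply, hbr, map_zero, sub_self, sub_zero]

def IsCocycle (br φ : M →ₗ[R] M →ₗ[R] M) : Prop :=
  ∀ x y z, br x (φ y z) - br y (φ x z) + br z (φ x y)
    - φ (br x y) z + φ (br x z) y - φ (br y z) x = 0

end Cochains

noncomputable def r2r2Bilin : (Fin 4 → ℂ) →ₗ[ℂ] (Fin 4 → ℂ) →ₗ[ℂ] (Fin 4 → ℂ) :=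
  LinearMap.mk₂ ℂ r2r2
    (fun _ _ _ => by
      ext m; fin_cases m <;> simp only [r2r2, Pi.add_apply, Fin.isValue, Fin.zero_eta, Fin.mk_one,
        Fin.reduceFinMk, Matrix.cons_val] <;> ring)
    (fun _ _ _ => by
      ext m; fin_cases m <;> simp only [r2r2, Pi.smul_apply, smul_eq_mul, Fin.isValue,
        Fin.zero_eta, Fin.mk_one, Fin.reduceFinMk, Matrix.cons_val] <;> ring)
    (fun _ _ _ => by
      ext m; fin_cases m <;> simp only [r2r2, Pi.add_apply, Fin.isValue, Fin.zero_eta, Fin.mk_one,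
        Fin.reduceFinMk, Matrix.cons_val] <;> ring)
    (fun _ _ _ => by
      ext m; fin_cases m <;> simp only [r2r2, Pi.smul_apply, smul_eq_mul, Fin.isValue,
        Fin.zero_eta, Fin.mk_one, Fin.reduceFinMk, Matrix.cons_val] <;> ring)

@[simp]
theorem r2r2Bilin_apply (x y : Fin 4 → ℂ) : r2r2Bilin x y = r2r2 x y := rfl

theorem r2r2Bilin_isAlt : r2r2Bilin.IsAlt := fun x => by
  ext m; fin_cases m <;> simp [r2r2, mul_comm]

-- `𝐞 i` is the paper's `wᵢ₊₁`.
local notation "𝐞" i:max => (Pi.single i (1 : ℂ) : Fin 4 → ℂ)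

@[simp]
theorem r2r2_single_zero (v : Fin 4 → ℂ) : r2r2 (𝐞 0) v = v 1 • 𝐞 0 := by
  ext m; fin_cases m <;> simp [r2r2]

@[simp]
theorem r2r2_single_one (v : Fin 4 → ℂ) : r2r2 (𝐞 1) v = -v 0 • 𝐞 0 := by
  ext m; fin_cases m <;> simp [r2r2]

@[simp]
theorem r2r2_single_two (v : Fin 4 → ℂ) : r2r2 (𝐞 2) v = v 3 • 𝐞 2 := by
  ext m; fin_cases m <;> simp [r2r2]

@[simp]
theorem r2r2_single_three (v : Fin 4 → ℂ) : r2r2 (𝐞 3) v = -v 2 • 𝐞 2 := by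
  ext m; fin_cases m <;> simp [r2r2]

section Cocycle

variable {φ : (Fin 4 → ℂ) →ₗ[ℂ] (Fin 4 → ℂ) →ₗ[ℂ] (Fin 4 → ℂ)}

theorem IsCocycle.r2r2_triple_identities (hφ : IsCocycle r2r2Bilin φ) (halt : φ.IsAlt) :
    φ (𝐞 0) (𝐞 2) = (φ (𝐞 1) (𝐞 2) 1 + φ (𝐞 0) (𝐞 2) 0) • 𝐞 0 + φ (𝐞 0) (𝐞 1) 3 • 𝐞 2 ∧
    φ (𝐞 0) (𝐞 3) = (φ (𝐞 1) (𝐞 3) 1 + φ (𝐞 0) (𝐞 3) 0) • 𝐞 0 - φ (𝐞 0) (𝐞 1) 2 • 𝐞 2 ∧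
    φ (𝐞 0) (𝐞 2) = -φ (𝐞 2) (𝐞 3) 1 • 𝐞 0 + (φ (𝐞 0) (𝐞 3) 3 + φ (𝐞 0) (𝐞 2) 2) • 𝐞 2 ∧
    φ (𝐞 1) (𝐞 2) = φ (𝐞 2) (𝐞 3) 0 • 𝐞 0 + (φ (𝐞 1) (𝐞 3) 3 + φ (𝐞 1) (𝐞 2) 2) • 𝐞 2 := by
  have h012 := hφ (𝐞 0) (𝐞 1) (𝐞 2)
  have h013 := hφ (𝐞 0) (𝐞 1) (𝐞 3)
  have h023 := hφ (𝐞 0) (𝐞 2) (𝐞 3)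
  have h123 := hφ (𝐞 1) (𝐞 2) (𝐞 3)
  simp only [Fin.isValue, r2r2Bilin_apply, r2r2_single_zero, r2r2_single_one, r2r2_single_two,
    r2r2_single_three, neg_smul, sub_neg_eq_add, Pi.single_eq_same, one_smul, ne_eq,
    Fin.reduceEq, not_false_eq_true, Pi.single_eq_of_ne, zero_smul, map_zero,
    LinearMap.zero_apply, add_zero, neg_zero, sub_zero,
    ← halt.neg (𝐞 0) (𝐞 2), ← halt.neg (𝐞 1) (𝐞 2)] at h012 h013 h023 h123
  refine ⟨?_, ?_, ?_, ?_⟩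
  · linear_combination (norm := module) -h012
  · linear_combination (norm := module) -h013
  · linear_combination (norm := module) h023
  · linear_combination (norm := module) h123

theorem IsCocycle.r2r2_normal_form (hφ : IsCocycle r2r2Bilin φ) (halt : φ.IsAlt) :
    φ (𝐞 0) (𝐞 2) = -φ (𝐞 2) (𝐞 3) 1 • 𝐞 0 + φ (𝐞 0) (𝐞 1) 3 • 𝐞 2 ∧
    φ (𝐞 0) (𝐞 3) = φ (𝐞 0) (𝐞 3) 0 • 𝐞 0 - φ (𝐞 0) (𝐞 1) 2 • 𝐞 2 ∧
    φ (𝐞 1) (𝐞 2) = φ (𝐞 2) (𝐞 3) 0 • 𝐞 0 + φ (𝐞 1) (𝐞 2) 2 • 𝐞 2 ∧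
    φ (𝐞 1) (𝐞 3) = φ (𝐞 1) (𝐞 3) 0 • 𝐞 0 + φ (𝐞 1) (𝐞 3) 2 • 𝐞 2 := by
  obtain ⟨h012, h013, h023, h123⟩ := hφ.r2r2_triple_identities halt
  refine ⟨?_, ?_, ?_, ?_⟩ <;> ext m <;> fin_cases m
  · simpa using congrFun h023 0
  · simpa using congrFun h012 1
  · simpa using congrFun h012 2
  · simpa using congrFun h012 3
  · simp
  · simpa using congrFun h013 1
  · simpa using congrFun h013 2
  · simpa using congrFun h013 3
  · simpa using congrFun h123 0
  · simpa using congrFun h123 1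
  · simp
  · simpa using congrFun h123 3
  · simp
  · simpa using congrFun h013 0
  · simp
  · simpa using congrFun h123 2

/-- The images of the basis vectors are read off by matching `coboundary r2r2Bilin λ` with the
normal form of `φ` pair by pair; the entries that are only determined up to an inner derivation
are set to `0`. -/
noncomputable def r2r2Witness (φ : (Fin 4 → ℂ) →ₗ[ℂ] (Fin 4 → ℂ) →ₗ[ℂ] (Fin 4 → ℂ)) :
    (Fin 4 → ℂ) →ₗ[ℂ] (Fin 4 → ℂ) :=
  Fintype.linearCombination ℂ
    ![![0, -φ (𝐞 0) (𝐞 1) 1, -φ (𝐞 0) (𝐞 1) 2, -φ (𝐞 0) (𝐞 1) 3],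
      ![0, φ (𝐞 0) (𝐞 1) 0, φ (𝐞 1) (𝐞 3) 2, -φ (𝐞 1) (𝐞 2) 2],
      ![-φ (𝐞 2) (𝐞 3) 0, -φ (𝐞 2) (𝐞 3) 1, 0, -φ (𝐞 2) (𝐞 3) 3],
      ![-φ (𝐞 1) (𝐞 3) 0, φ (𝐞 0) (𝐞 3) 0, 0, φ (𝐞 2) (𝐞 3) 2]]

theorem IsCocycle.r2r2_eq_coboundary (hφ : IsCocycle r2r2Bilin φ) (halt : φ.IsAlt) :
    φ = coboundary r2r2Bilin (r2r2Witness φ) := by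
  obtain ⟨h02, h03, h12, h13⟩ := hφ.r2r2_normal_form halt
  refine halt.ext_basis_of_lt (Pi.basisFun ℂ (Fin 4)) (isAlt_coboundary r2r2Bilin_isAlt _) ?_
  intro i j hij
  fin_cases i <;> fin_cases j <;> try exact absurd hij (by decide)
  all_goals simp only [Pi.basisFun_apply, Fin.zero_eta, Fin.mk_one, Fin.reduceFinMk]
  on_goal 2 => rw [h02]
  on_goal 3 => rw [h03]
  on_goal 4 => rw [h12]
  on_goal 5 => rw [h13]
  all_goals ext m; fin_cases m <;> simp [r2r2Witness]

end Cocycle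

theorem r2r2_H2_vanishes
    (φ : (Fin 4 → ℂ) →ₗ[ℂ] (Fin 4 → ℂ) →ₗ[ℂ] (Fin 4 → ℂ))
    (halt : ∀ x, φ x x = 0)
    (hcocycle : ∀ x y z,
      r2r2 x (φ y z) - r2r2 y (φ x z) + r2r2 z (φ x y)
        - φ (r2r2 x y) z + φ (r2r2 x z) y - φ (r2r2 y z) x = 0) :
    ∃ lam : (Fin 4 → ℂ) →ₗ[ℂ] (Fin 4 → ℂ),
      ∀ x y, φ x y = r2r2 x (lam y) - r2r2 y (lam x) - lam (r2r2 x y) := by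
  have hφ : IsCocycle r2r2Bilin φ := hcocycle
  exact ⟨r2r2Witness φ, fun x y => LinearMap.congr_fun₂ (hφ.r2r2_eq_coboundary halt) x y⟩
end
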